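/- For θ ∈ (0, π/4] fixed, the function c ↦ ρ(θ,c) (the asymptotic rate of regularized Douglas–Rachford) attains its minimum over c ∈ (0,1) at c* = 1/(cos θ + sin θ)², with minimum value ρ(θ,c*) = cos θ/(cos θ + sin θ) = 1/(1 + tan θ); moreover ρ(θ,c) < cos θ for all c ∈ (c^♯, 1) where c^♯ = 1/(1 + 2cos θ) is the unique solution of ρ(θ,c) = cos θ on (0, c*). -/

import Mathlib

/-!
Write `a = cos θ`, `b = sin θ`, so `cos 2θ = a² - b²`, and let `D = c² cos² 2θ - 2c + 1` be the
discriminant of the lower branch. Two polynomial identities, valid on `a² + b² = 1`, carry the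
whole argument:
`D (a + b)² - (2a - (a + b) - c cos 2θ (a + b))² = 4ab (1 - c (a + b)²)`, so the lower branch
stays above `a / (a + b)` for `c < c*`, while the upper branch `√c a` is increasing; and
`D - (2a - 1 - c cos 2θ)² = 4a (a - 1) (c (1 + 2a) - 1)`, whose sign decides how the lower branch
compares with `a` and vanishes exactly at `c♯ = 1 / (1 + 2a)`.
-/

open Real

/-- The asymptotic rate `ρ(θ,c)` of regularized Douglas–Rachford. -/
noncomputable def rateDR (θ c : ℝ) : ℝ :=
  if 1 / (Real.cos θ + Real.sin θ) ^ 2 ≤ c then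
    Real.sqrt c * Real.cos θ
  else
    (c * Real.cos (2 * θ) + 1 + Real.sqrt (c ^ 2 * Real.cos (2 * θ) ^ 2 - 2 * c + 1)) / 2

/-- The branch of `rateDR` below `c* = 1 / (cos θ + sin θ)²`, with `k = cos 2θ`. -/
noncomputable def lowerRate (k c : ℝ) : ℝ :=
  (c * k + 1 + √(c ^ 2 * k ^ 2 - 2 * c + 1)) / 2

section Algebra

variable {a b c : ℝ}

lemma div_add_lt_lowerRate (ha : 0 < a) (hb : 0 < b) (hab : a ^ 2 + b ^ 2 = 1)
    (hc : c * (a + b) ^ 2 < 1) : a / (a + b) < lowerRate (a ^ 2 - b ^ 2) c := by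
  have hK : 0 < a + b := by positivity
  have key : (c ^ 2 * (a ^ 2 - b ^ 2) ^ 2 - 2 * c + 1) * (a + b) ^ 2
      - (2 * a - (a + b) - c * (a ^ 2 - b ^ 2) * (a + b)) ^ 2
      = 4 * a * b * (1 - c * (a + b) ^ 2) := by
    linear_combination (2 * c * (a + b) ^ 2) * hab
  have hpos : 0 < 4 * a * b * (1 - c * (a + b) ^ 2) := by
    have := sub_pos.2 hc
    positivity
  have hsqrt := lt_sqrt_of_sq_lt (show (2 * a - (a + b) - c * (a ^ 2 - b ^ 2) * (a + b)) ^ 2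
      < (c ^ 2 * (a ^ 2 - b ^ 2) ^ 2 - 2 * c + 1) * (a + b) ^ 2 by linarith)
  rw [sqrt_mul' _ (sq_nonneg _), sqrt_sq hK.le] at hsqrt
  rw [lowerRate, div_lt_div_iff₀ hK two_pos]
  linarith

lemma div_le_sqrt_mul {K : ℝ} (hK : 0 < K) (ha : 0 ≤ a) (hc : 1 / K ^ 2 ≤ c) :
    a / K ≤ √c * a := by
  have h : 1 / K ≤ √c := by
    simpa only [one_div, sqrt_inv, sqrt_sq hK.le] using sqrt_le_sqrt hc
  calc a / K = 1 / K * a := by ring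
    _ ≤ √c * a := by gcongr

lemma discr_sub_sq_eq (hab : a ^ 2 + b ^ 2 = 1) :
    c ^ 2 * (a ^ 2 - b ^ 2) ^ 2 - 2 * c + 1 - (2 * a - 1 - c * (a ^ 2 - b ^ 2)) ^ 2
      = 4 * a * (a - 1) * (c * (1 + 2 * a) - 1) := by
  rw [show a ^ 2 - b ^ 2 = 2 * a ^ 2 - 1 by linarith]
  ring

variable (hb : 0 < b) (hba : b ≤ a) (hab : a ^ 2 + b ^ 2 = 1)
include hb hba hab

lemma two_mul_sub_one_sub_mul_pos (hc : c ≤ 1) : 0 < 2 * a - 1 - c * (a ^ 2 - b ^ 2) := by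
  have ha1 : a < 1 := by nlinarith
  have hk : 0 ≤ a ^ 2 - b ^ 2 := by nlinarith
  nlinarith [mul_le_mul_of_nonneg_right hc hk]

lemma lowerRate_lt (hc : 1 < c * (1 + 2 * a)) (hc1 : c ≤ 1) :
    lowerRate (a ^ 2 - b ^ 2) c < a := by
  have ha1 : a < 1 := by nlinarith
  have hneg : 4 * a * (a - 1) * (c * (1 + 2 * a) - 1) < 0 :=
    mul_neg_of_neg_of_pos (mul_neg_of_pos_of_neg (by linarith) (by linarith)) (by linarith)
  have h : √(c ^ 2 * (a ^ 2 - b ^ 2) ^ 2 - 2 * c + 1) < 2 * a - 1 - c * (a ^ 2 - b ^ 2) :=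
    (sqrt_lt' (two_mul_sub_one_sub_mul_pos hb hba hab hc1)).2
      (by linarith [discr_sub_sq_eq (c := c) hab])
  rw [lowerRate]
  linarith

lemma lowerRate_eq_iff (hc1 : c ≤ 1) :
    lowerRate (a ^ 2 - b ^ 2) c = a ↔ c = 1 / (1 + 2 * a) := by
  have ha1 : a < 1 := by nlinarith
  have hR := two_mul_sub_one_sub_mul_pos hb hba hab hc1
  calc lowerRate (a ^ 2 - b ^ 2) c = a
      ↔ √(c ^ 2 * (a ^ 2 - b ^ 2) ^ 2 - 2 * c + 1) = 2 * a - 1 - c * (a ^ 2 - b ^ 2) := by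
        rw [lowerRate]; constructor <;> intro h <;> linarith
    _ ↔ c ^ 2 * (a ^ 2 - b ^ 2) ^ 2 - 2 * c + 1 = (2 * a - 1 - c * (a ^ 2 - b ^ 2)) ^ 2 := by
        rw [sqrt_eq_iff_mul_self_eq_of_pos hR, ← sq, eq_comm]
    _ ↔ 4 * a * (a - 1) * (c * (1 + 2 * a) - 1) = 0 := by
        rw [← discr_sub_sq_eq hab, sub_eq_zero]
    _ ↔ c = 1 / (1 + 2 * a) := by
        rw [mul_eq_zero, or_iff_right (by nlinarith), eq_div_iff (by linarith), sub_eq_zero]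

end Algebra

lemma sin_le_cos_of_nonneg_of_le_pi_div_four {θ : ℝ} (h0 : 0 ≤ θ) (h : θ ≤ π / 4) :
    sin θ ≤ cos θ := by
  have hsin := sin_le_sin_of_le_of_le_pi_div_two (by linarith [pi_pos]) (by linarith [pi_pos]) h
  have hcos := cos_le_cos_of_nonneg_of_le_pi h0 (by linarith [pi_pos]) h
  rw [sin_pi_div_four] at hsin
  rw [cos_pi_div_four] at hcos
  linarith

section Rate

variable {θ c : ℝ}

lemma rateDR_of_le (hc : 1 / (cos θ + sin θ) ^ 2 ≤ c) : rateDR θ c = √c * cos θ :=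
  if_pos hc

lemma rateDR_of_lt (hc : c < 1 / (cos θ + sin θ) ^ 2) :
    rateDR θ c = lowerRate (cos θ ^ 2 - sin θ ^ 2) c := by
  rw [rateDR, if_neg hc.not_ge, lowerRate, cos_two_mul']

variable (hs : 0 < sin θ) (hsc : sin θ ≤ cos θ)
include hs hsc

lemma div_add_le_rateDR (c : ℝ) : cos θ / (cos θ + sin θ) ≤ rateDR θ c := by
  have hK : 0 < cos θ + sin θ := by linarith
  rcases le_or_gt (1 / (cos θ + sin θ) ^ 2) c with h | h
  · rw [rateDR_of_le h]
    exact div_le_sqrt_mul hK (by linarith) h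
  · rw [rateDR_of_lt h]
    exact (div_add_lt_lowerRate (by linarith) hs (cos_sq_add_sin_sq θ)
      ((lt_div_iff₀ (by positivity)).1 h)).le

lemma rateDR_lt_cos (hc : 1 / (1 + 2 * cos θ) < c) (hc1 : c < 1) : rateDR θ c < cos θ := by
  have hco : 0 < cos θ := hs.trans_le hsc
  rcases le_or_gt (1 / (cos θ + sin θ) ^ 2) c with h | h
  · rw [rateDR_of_le h]
    exact mul_lt_of_lt_one_left hco ((sqrt_lt' one_pos).2 (by linarith))
  · rw [rateDR_of_lt h]
    exact lowerRate_lt hs hsc (cos_sq_add_sin_sq θ)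
      ((div_lt_iff₀ (by positivity)).1 hc |>.trans_eq' (by ring)) hc1.le

end Rate

/-- For fixed `θ ∈ (0, π/4]`: `c ↦ ρ(θ,c)` attains its minimum on `(0,1)` at
`c* = 1/(cos θ + sin θ)²`, with value `cos θ/(cos θ + sin θ) = 1/(1 + tan θ)`;
`ρ(θ,c) < cos θ` for all `c ∈ (c♯, 1)`, where `c♯ = 1/(1 + 2cos θ)` is the unique
solution of `ρ(θ,c) = cos θ` in `(0, c*)`. -/
theorem stmt17 (θ : ℝ) (hθ : θ ∈ Set.Ioc 0 (π / 4)) :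
    (∀ c ∈ Set.Ioo (0:ℝ) 1,
      rateDR θ (1 / (Real.cos θ + Real.sin θ) ^ 2) ≤ rateDR θ c) ∧
    rateDR θ (1 / (Real.cos θ + Real.sin θ) ^ 2)
      = Real.cos θ / (Real.cos θ + Real.sin θ) ∧
    Real.cos θ / (Real.cos θ + Real.sin θ) = 1 / (1 + Real.tan θ) ∧
    (∀ c ∈ Set.Ioo (1 / (1 + 2 * Real.cos θ)) 1, rateDR θ c < Real.cos θ) ∧
    rateDR θ (1 / (1 + 2 * Real.cos θ)) = Real.cos θ ∧
    (∀ c ∈ Set.Ioo 0 (1 / (Real.cos θ + Real.sin θ) ^ 2),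
      rateDR θ c = Real.cos θ → c = 1 / (1 + 2 * Real.cos θ)) := by
  obtain ⟨hθ0, hθ4⟩ := hθ
  have hs : 0 < sin θ := sin_pos_of_pos_of_lt_pi hθ0 (by linarith [pi_pos])
  have hsc : sin θ ≤ cos θ := sin_le_cos_of_nonneg_of_le_pi_div_four hθ0.le hθ4
  have hpyth := cos_sq_add_sin_sq θ
  have hK : 0 < cos θ + sin θ := by linarith
  have hcStar : rateDR θ (1 / (cos θ + sin θ) ^ 2) = cos θ / (cos θ + sin θ) := by
    rw [rateDR_of_le le_rfl, one_div, sqrt_inv, sqrt_sq hK.le]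
    ring
  have hcStar_lt_one : 1 / (cos θ + sin θ) ^ 2 < 1 := by
    rw [div_lt_one (by positivity)]
    nlinarith
  have hcSharp_lt : 1 / (1 + 2 * cos θ) < 1 / (cos θ + sin θ) ^ 2 :=
    one_div_lt_one_div_of_lt (by positivity) (by nlinarith)
  refine ⟨fun c _ ↦ hcStar ▸ div_add_le_rateDR hs hsc c, hcStar, ?_,
    fun c hc ↦ rateDR_lt_cos hs hsc hc.1 hc.2, ?_, ?_⟩
  · have hco : cos θ ≠ 0 := (hs.trans_le hsc).ne'
    rw [tan_eq_sin_div_cos]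
    field_simp
  · rw [rateDR_of_lt hcSharp_lt]
    exact (lowerRate_eq_iff hs hsc hpyth (by linarith)).2 rfl
  · rintro c ⟨-, hc⟩ h
    rw [rateDR_of_lt hc] at h
    exact (lowerRate_eq_iff hs hsc hpyth (by linarith)).1 h
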